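/- Let k be a real number and y a fixed point of ℝ³, and let g(x) = exp(i k ‖x − y‖)/(4π ‖x − y‖) for x ≠ y. Then g satisfies the Sommerfeld radiation condition: ‖x‖ · ( (x/‖x‖) ⬝ ∇g(x) − i k g(x) ) tends to 0 as ‖x‖ → ∞, where (x/‖x‖) ⬝ ∇g(x) denotes the radial derivative, i.e., the directional derivative of g at x in the direction x/‖x‖. -/

import Mathlib

/-!
Write `g(x) = Φ(‖x - y‖)` with `Φ(r) = e^{ikr} / (4πr)`, so that `Φ' = (ik - 1/r) Φ`. With
`u = (x - y)/‖x - y‖`, `x̂ = x/‖x‖` and `c = ⟪u, x̂⟫`, the chain rule gives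
`∂_x̂ g - ik g = ((c - 1) ik - c/‖x - y‖) Φ(‖x - y‖)`. Since `|c - 1| ≤ ‖u - x̂‖ ≤ 2‖y‖/‖x - y‖`,
`|Φ(r)| = 1/(4πr)` and `‖x - y‖ > ‖x‖/2` once `‖x‖ > 2‖y‖`, the product with `‖x‖` is `O(1/‖x‖)`.
-/

open MeasureTheory Filter Real
open scoped Topology

noncomputable section

/-- Euclidean 3-space. -/
abbrev E3 := EuclideanSpace ℝ (Fin 3)

/-- The free-space Green's function of the Helmholtz operator `Δ + k²` in `ℝ³`. -/
def greens (k : ℝ) (x y : E3) : ℂ :=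
  Complex.exp (Complex.I * (k : ℂ) * (‖x - y‖ : ℂ)) / ((4 * Real.pi * ‖x - y‖ : ℝ) : ℂ)

open scoped InnerProductSpace

section RadialFunctions

variable {E : Type*} [NormedAddCommGroup E] [InnerProductSpace ℝ E]
  {F : Type*} [NormedAddCommGroup F] [NormedSpace ℝ F]

theorem hasStrictFDerivAt_norm {x : E} (hx : x ≠ 0) :
    HasStrictFDerivAt (fun z : E => ‖z‖) (‖x‖⁻¹ • innerSL ℝ x) x := by
  have hx' : ‖x‖ ≠ 0 := norm_ne_zero_iff.mpr hx
  convert (hasStrictFDerivAt_norm_sq x).sqrt (pow_ne_zero 2 hx') using 1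
  · simp [Real.sqrt_sq (norm_nonneg _)]
  · ext d
    simp only [smul_apply, coe_innerSL_apply, smul_eq_mul,
      Real.sqrt_sq (norm_nonneg x), nsmul_eq_mul, Nat.cast_ofNat]
    field_simp

theorem fderiv_comp_norm_sub_apply {h : ℝ → F} {h' : F} {x y : E} (hxy : x ≠ y)
    (hh : HasDerivAt h h' ‖x - y‖) (d : E) :
    fderiv ℝ (fun z => h ‖z - y‖) x d = ⟪‖x - y‖⁻¹ • (x - y), d⟫_ℝ • h' := by
  have hcomp : HasFDerivAt (fun z => h ‖z - y‖) _ x := hh.hasFDerivAt.comp x <|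
    (hasStrictFDerivAt_norm (sub_ne_zero.mpr hxy)).hasFDerivAt.comp x
      (hasFDerivAt_sub_const y)
  rw [hcomp.fderiv]
  simp [real_inner_smul_left, mul_smul, inner_sub_left, sub_smul]

theorem abs_real_inner_inv_norm_smul_sub_one_le {u v : E} (hu : u ≠ 0) (hv : v ≠ 0) :
    |⟪‖u‖⁻¹ • u, ‖v‖⁻¹ • v⟫_ℝ - 1| ≤ 2 * ‖u - v‖ / ‖u‖ := by
  set a := ‖u‖⁻¹ • u
  set b := ‖v‖⁻¹ • v
  have hb : ‖b‖ = 1 := norm_smul_inv_norm hv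
  have hab : a - b = ‖u‖⁻¹ • (u - v) + (‖u‖⁻¹ - ‖v‖⁻¹) • v := by
    simp only [a, b, smul_sub, sub_smul]; abel
  have hrev : ‖(‖u‖⁻¹ - ‖v‖⁻¹) • v‖ ≤ ‖u - v‖ / ‖u‖ := by
    have hv' : ‖v‖ ≠ 0 := norm_ne_zero_iff.mpr hv
    calc ‖(‖u‖⁻¹ - ‖v‖⁻¹) • v‖ = |‖v‖ - ‖u‖| / ‖u‖ := by
          rw [norm_smul, Real.norm_eq_abs, ← abs_norm v, ← abs_mul, abs_norm v,
            ← abs_norm u, ← abs_div, abs_norm u]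
          congr 1
          field_simp
      _ ≤ ‖u - v‖ / ‖u‖ := by
          gcongr
          rw [norm_sub_rev]
          exact abs_norm_sub_norm_le v u
  calc |⟪a, b⟫_ℝ - 1| = |⟪a - b, b⟫_ℝ| := by
        rw [inner_sub_left, real_inner_self_eq_norm_sq, hb, one_pow]
    _ ≤ ‖a - b‖ * ‖b‖ := abs_real_inner_le_norm _ _
    _ = ‖a - b‖ := by rw [hb, mul_one]
    _ ≤ ‖u‖⁻¹ * ‖u - v‖ + ‖u - v‖ / ‖u‖ := by
        rw [hab]
        refine (norm_add_le _ _).trans (add_le_add ?_ hrev)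
        rw [norm_smul, norm_inv, norm_norm]
    _ = 2 * ‖u - v‖ / ‖u‖ := by ring

end RadialFunctions

def greensProfile (k r : ℝ) : ℂ := Complex.exp (Complex.I * k * r) / ((4 * π * r : ℝ) : ℂ)

theorem hasDerivAt_greensProfile (k : ℝ) {r : ℝ} (hr : r ≠ 0) :
    HasDerivAt (greensProfile k) ((Complex.I * k - (r : ℂ)⁻¹) * greensProfile k r) r := by
  have hexp : HasDerivAt (fun t : ℝ => Complex.exp (Complex.I * k * t))
      (Complex.exp (Complex.I * k * r) * (Complex.I * k)) r := by
    simpa using ((hasDerivAt_id r).ofReal_comp.const_mul (Complex.I * k)).cexp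
  have hden : HasDerivAt (fun t : ℝ => ((4 * π * t : ℝ) : ℂ)) ((4 * π : ℝ) : ℂ) r := by
    simpa using ((hasDerivAt_id r).const_mul (4 * π)).ofReal_comp
  have hden0 : ((4 * π * r : ℝ) : ℂ) ≠ 0 := by
    exact_mod_cast mul_ne_zero (by positivity) hr
  refine (show HasDerivAt (greensProfile k) _ r from hexp.div hden hden0).congr_deriv ?_
  have hr' : (r : ℂ) ≠ 0 := by exact_mod_cast hr
  rw [greensProfile]
  push_cast
  field_simp

theorem norm_greensProfile (k : ℝ) {r : ℝ} (hr : 0 < r) :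
    ‖greensProfile k r‖ = (4 * π * r)⁻¹ := by
  rw [greensProfile, norm_div, mul_assoc, ← Complex.ofReal_mul, Complex.norm_exp_I_mul_ofReal,
    Complex.norm_real, Real.norm_of_nonneg (by positivity), one_div]

theorem greens_eq_greensProfile (k : ℝ) (x y : E3) : greens k x y = greensProfile k ‖x - y‖ :=
  rfl

theorem fderiv_greens_apply_sub (k : ℝ) {x y : E3} (hxy : x ≠ y) (d : E3) :
    fderiv ℝ (fun z => greens k z y) x d - Complex.I * k * greens k x y =
      (((⟪‖x - y‖⁻¹ • (x - y), d⟫_ℝ - 1 : ℝ) : ℂ) * (Complex.I * k)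
        - (⟪‖x - y‖⁻¹ • (x - y), d⟫_ℝ : ℂ) / ‖x - y‖) * greens k x y := by
  have hr : ‖x - y‖ ≠ 0 := norm_ne_zero_iff.mpr (sub_ne_zero.mpr hxy)
  simp only [greens_eq_greensProfile]
  rw [fderiv_comp_norm_sub_apply hxy (hasDerivAt_greensProfile k hr), Complex.real_smul]
  push_cast
  ring

theorem norm_mul_fderiv_greens_radial_sub_le (k : ℝ) {x y : E3} (hx : 2 * ‖y‖ < ‖x‖) :
    ‖(‖x‖ : ℂ) * (fderiv ℝ (fun z => greens k z y) x (‖x‖⁻¹ • x) - Complex.I * k * greens k x y)‖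
      ≤ (2 * |k| * ‖y‖ + 1) / π / ‖x‖ := by
  have hxr : ‖x‖ < 2 * ‖x - y‖ := by linarith [norm_sub_norm_le x y]
  have hx0 : x ≠ 0 := norm_pos_iff.mp (by linarith [norm_nonneg y])
  have hxy : x - y ≠ 0 := norm_pos_iff.mp (by linarith [norm_nonneg x])
  have hc : |⟪‖x - y‖⁻¹ • (x - y), ‖x‖⁻¹ • x⟫_ℝ| ≤ 1 := by
    have hu : ‖‖x - y‖⁻¹ • (x - y)‖ = 1 := norm_smul_inv_norm hxy
    have hv : ‖‖x‖⁻¹ • x‖ = 1 := norm_smul_inv_norm hx0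
    simpa [hu, hv] using abs_real_inner_le_norm (‖x - y‖⁻¹ • (x - y)) (‖x‖⁻¹ • x)
  have hc1 : |⟪‖x - y‖⁻¹ • (x - y), ‖x‖⁻¹ • x⟫_ℝ - 1| ≤ 2 * ‖y‖ / ‖x - y‖ := by
    simpa using abs_real_inner_inv_norm_smul_sub_one_le hxy hx0
  rw [fderiv_greens_apply_sub k (sub_ne_zero.mp hxy), greens_eq_greensProfile]
  generalize ⟪‖x - y‖⁻¹ • (x - y), ‖x‖⁻¹ • x⟫_ℝ = c at hc hc1 ⊢
  generalize ‖x - y‖ = r at hxr hc1 ⊢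
  have hr : 0 < r := by linarith [norm_pos_iff.mpr hx0]
  have hxr' : ‖x‖ / (2 * r) ≤ 1 := (div_le_one (by positivity)).mpr hxr.le
  calc ‖(‖x‖ : ℂ) * ((((c - 1 : ℝ) : ℂ) * (Complex.I * k) - (c : ℂ) / r) * greensProfile k r)‖
      = ‖x‖ * (‖((c - 1 : ℝ) : ℂ) * (Complex.I * k) - (c : ℂ) / r‖ * (4 * π * r)⁻¹) := by
        rw [norm_mul, norm_mul, norm_greensProfile k hr, Complex.norm_real, norm_norm]
    _ ≤ ‖x‖ * ((|c - 1| * |k| + |c| / r) * (4 * π * r)⁻¹) := by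
        gcongr
        refine (norm_sub_le _ _).trans_eq ?_
        simp only [norm_mul, norm_div, Complex.norm_real, Real.norm_eq_abs, Complex.norm_I, one_mul,
          abs_of_pos hr]
    _ ≤ ‖x‖ * ((2 * ‖y‖ / r * |k| + 1 / r) * (4 * π * r)⁻¹) := by gcongr
    _ = (‖x‖ / (2 * r)) ^ 2 * ((2 * |k| * ‖y‖ + 1) / π) / ‖x‖ := by
        field_simp
        ring
    _ ≤ 1 * ((2 * |k| * ‖y‖ + 1) / π) / ‖x‖ := by gcongr; exact pow_le_one₀ (by positivity) hxr'
    _ = (2 * |k| * ‖y‖ + 1) / π / ‖x‖ := by rw [one_mul]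

/-- For real `k` and fixed `y ∈ ℝ³`, `g(x) = exp(i k ‖x − y‖)/(4π ‖x − y‖)` satisfies
the Sommerfeld radiation condition: `‖x‖ · ((x/‖x‖) ⬝ ∇g(x) − i k g(x)) → 0` as `‖x‖ → ∞`,
where `(x/‖x‖) ⬝ ∇g(x)` is the directional derivative of `g` at `x` in direction `x/‖x‖`. -/
theorem greens_radiation_condition (k : ℝ) (y : E3) :
    Filter.Tendsto
      (fun x : E3 => (‖x‖ : ℂ) *
        (fderiv ℝ (fun z => greens k z y) x (‖x‖⁻¹ • x)
          - Complex.I * (k : ℂ) * greens k x y))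
      (Filter.comap (fun x : E3 => ‖x‖) Filter.atTop) (𝓝 0) := by
  have hnorm : Tendsto (fun x : E3 => ‖x‖) (comap (fun x : E3 => ‖x‖) atTop) atTop :=
    tendsto_comap
  refine squeeze_zero_norm' ?_
    (tendsto_const_nhds (x := (2 * |k| * ‖y‖ + 1) / π).div_atTop hnorm)
  filter_upwards [hnorm.eventually_gt_atTop (2 * ‖y‖)] with x hx
  exact norm_mul_fderiv_greens_radial_sub_le k hx

end
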